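/- arXiv:0709.0915 — 8 statements merged into one kernel-verified Lean document; each statement's English description precedes it below -/
import Mathlib

section
/- Let ϑ be a unital *-endomorphism of B(H) and ξ ∈ H a unit vector. The map (x, y) ↦ ϑ(x ξ*) y from H × (ϑ(ξξ*)H) to H induces an isometry v : H ⊗ (ϑ(ξξ*)H) → H, i.e. ⟨ϑ(xξ*)y, ϑ(x'ξ*)y'⟩ = ⟨x,x'⟩⟨y,y'⟩ for all x,x' ∈ H and y, y' in the range of the projection ϑ(ξξ*). -/
/-! Since `ϑ` is a *-homomorphism, `ϑ(xξ*)* ϑ(x'ξ*) = ϑ(ξx* x'ξ*) = ⟨x,x'⟩ ϑ(ξξ*)`, and the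
idempotent `ϑ(ξξ*)` fixes every vector of its range. -/

open scoped InnerProductSpace

/-- The rank-one operator `u v* : z ↦ u⟨v,z⟩`. -/
noncomputable def rankOne {H : Type*} [NormedAddCommGroup H] [InnerProductSpace ℂ H]
    (u v : H) : H →L[ℂ] H :=
  (innerSL ℂ v).smulRight u

open ContinuousLinearMap

section

variable {H : Type*} [NormedAddCommGroup H] [InnerProductSpace ℂ H]

lemma rankOne_eq_innerProductSpace_rankOne (u v : H) :
    rankOne u v = InnerProductSpace.rankOne ℂ u v := rfl

lemma isIdempotentElem_rankOne_self {ξ : H} (hξ : ⟪ξ, ξ⟫_ℂ = 1) :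
    IsIdempotentElem (rankOne ξ ξ) := by
  have hnorm : ‖ξ‖ = 1 := by
    rw [← pow_eq_one_iff_of_nonneg (norm_nonneg ξ) two_ne_zero,
      ← inner_self_eq_norm_sq (𝕜 := ℂ), hξ, RCLike.one_re]
  exact InnerProductSpace.isIdempotentElem_rankOne_self hnorm

lemma star_rankOne_mul_rankOne [CompleteSpace H] (x x' ξ : H) :
    star (rankOne x ξ) * rankOne x' ξ = ⟪x, x'⟫_ℂ • rankOne ξ ξ := by
  simp only [rankOne_eq_innerProductSpace_rankOne, star_eq_adjoint,
    InnerProductSpace.adjoint_rankOne, mul_def, InnerProductSpace.rankOne_comp_rankOne]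

end

lemma inner_map_apply_map_apply {𝕜 E A F : Type*} [RCLike 𝕜] [NormedAddCommGroup E]
    [InnerProductSpace 𝕜 E] [CompleteSpace E] [Mul A] [Star A] [FunLike F A (E →L[𝕜] E)]
    [MulHomClass F A (E →L[𝕜] E)] [StarHomClass F A (E →L[𝕜] E)] (φ : F) (a b : A) (y y' : E) :
    ⟪φ a y, φ b y'⟫_𝕜 = ⟪y, φ (star a * b) y'⟫_𝕜 := by
  rw [map_mul, map_star, star_eq_adjoint]
  exact (adjoint_inner_right _ _ _).symm

lemma IsIdempotentElem.apply_of_mem_range {R M : Type*} [Semiring R] [AddCommMonoid M]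
    [Module R M] [TopologicalSpace M] {p : M →L[R] M} (hp : IsIdempotentElem p) {y : M}
    (hy : y ∈ Set.range p) : p y = y := by
  obtain ⟨w, rfl⟩ := hy
  exact DFunLike.congr_fun hp.eq w

theorem bhat_isometry_general {H : Type*} [NormedAddCommGroup H] [InnerProductSpace ℂ H]
    [CompleteSpace H]
    (ϑ : (H →L[ℂ] H) →⋆ₐ[ℂ] (H →L[ℂ] H))
    (ξ : H) (hξ : ⟪ξ, ξ⟫_ℂ = 1)
    (x x' y y' : H)
    (hy' : y' ∈ Set.range (ϑ (rankOne ξ ξ))) :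
    ⟪ϑ (rankOne x ξ) y, ϑ (rankOne x' ξ) y'⟫_ℂ = ⟪x, x'⟫_ℂ * ⟪y, y'⟫_ℂ := by
  have hP : IsIdempotentElem (ϑ (rankOne ξ ξ)) := (isIdempotentElem_rankOne_self hξ).map ϑ
  rw [inner_map_apply_map_apply, star_rankOne_mul_rankOne, map_smul, smul_apply,
    hP.apply_of_mem_range hy', inner_smul_right]

/-- Let `ϑ` be a unital *-endomorphism of `B(H)` and `ξ` a unit vector.  The map
`(x, y) ↦ ϑ(xξ*) y` from `H × ϑ(ξξ*)H` to `H` induces an isometry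
`H ⊗ ϑ(ξξ*)H → H`:  `⟨ϑ(xξ*)y, ϑ(x'ξ*)y'⟩ = ⟨x,x'⟩⟨y,y'⟩` for `x, x' ∈ H` and
`y, y'` in the range of the projection `ϑ(ξξ*)`. -/
theorem bhat_isometry {H : Type*} [NormedAddCommGroup H] [InnerProductSpace ℂ H]
    [CompleteSpace H]
    (ϑ : (H →L[ℂ] H) →⋆ₐ[ℂ] (H →L[ℂ] H))
    (ξ : H) (hξ : ⟪ξ, ξ⟫_ℂ = 1)
    (x x' y y' : H)
    (hy : y ∈ Set.range (ϑ (rankOne ξ ξ)))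
    (hy' : y' ∈ Set.range (ϑ (rankOne ξ ξ))) :
    ⟪ϑ (rankOne x ξ) y, ϑ (rankOne x' ξ) y'⟫_ℂ = ⟪x, x'⟫_ℂ * ⟪y, y'⟫_ℂ :=
  bhat_isometry_general ϑ ξ hξ x x' y y' hy'
end

section
/- Let ξ ∈ H be a unit vector and let ϑ_s, ϑ_t be unital *-endomorphisms of B(H) with ϑ_{s+t} = ϑ_t ∘ ϑ_s; for r ∈ {s, t, s+t} set E_r = ϑ_r(ξξ*)H, and for x ∈ H and y ∈ E_r define the product x y := ϑ_r(xξ*)y. Then (x y_s) z_t = x (y_s z_t) for all x ∈ H, y_s ∈ ϑ_s(ξξ*)H, z_t ∈ ϑ_t(ξξ*)H. -/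
open scoped InnerProductSpace

/-- Associativity of the Bhat product:  for unital *-endomorphisms `ϑs, ϑt` of `B(H)`
with `ϑst = ϑt ∘ ϑs`, a unit vector `ξ`, and `x ∈ H`, `ys ∈ ϑs(ξξ*)H`,
`zt ∈ ϑt(ξξ*)H`, one has `(x ys) zt = x (ys zt)` where `x yt := ϑt(xξ*) yt`. -/
theorem bhat_product_assoc {H : Type*} [NormedAddCommGroup H] [InnerProductSpace ℂ H]
    [CompleteSpace H]
    (ϑs ϑt ϑst : (H →L[ℂ] H) →⋆ₐ[ℂ] (H →L[ℂ] H))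
    (hcomp : ∀ a, ϑst a = ϑt (ϑs a))
    (ξ : H) (hξ : ⟪ξ, ξ⟫_ℂ = 1)
    (x ys zt : H)
    (hys : ys ∈ Set.range (ϑs (rankOne ξ ξ)))
    (hzt : zt ∈ Set.range (ϑt (rankOne ξ ξ))) :
    ϑt (rankOne (ϑs (rankOne x ξ) ys) ξ) zt
      = ϑst (rankOne x ξ) (ϑt (rankOne ys ξ) zt) := by
  have key : rankOne (ϑs (rankOne x ξ) ys) ξ = ϑs (rankOne x ξ) * rankOne ys ξ := by
    ext z
    simp [rankOne, ContinuousLinearMap.mul_apply, map_smul]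
  rw [key, map_mul, hcomp, ContinuousLinearMap.mul_apply]
end

section
/- Let ϑ be a normal unital *-endomorphism of B(H), ξ a unit vector, E^B = ϑ(ξξ*)H the Bhat space and E^A = {x' ∈ B(H) : ϑ(a)x' = x'a ∀a} the Arveson space. Then: (i) for each x ∈ E^B the map u(x) : h ↦ ϑ(hξ*)x belongs to E^A; (ii) for each x' ∈ E^A the vector x'ξ belongs to E^B; (iii) these maps are mutually inverse isometries between E^B and E^A. -/
open scoped InnerProductSpace

/-- Normality (σ-weak continuity) of a map on `B(H)`, expressed via weak-operator
convergence of bounded nets. -/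
def IsNormalMap {H : Type*} [NormedAddCommGroup H] [InnerProductSpace ℂ H]
    (ϑ : (H →L[ℂ] H) → (H →L[ℂ] H)) : Prop :=
  ∀ (ι : Type) (l : Filter ι) (f : ι → H →L[ℂ] H) (b : H →L[ℂ] H),
    (∀ i, ‖f i‖ ≤ 1) →
    (∀ g g' : H, Filter.Tendsto (fun i => ⟪g, f i g'⟫_ℂ) l (nhds ⟪g, b g'⟫_ℂ)) →
    ∀ h h' : H, Filter.Tendsto (fun i => ⟪h, ϑ (f i) h'⟫_ℂ) l (nhds ⟪h, ϑ b h'⟫_ℂ)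

section Aux

variable {H : Type*} [NormedAddCommGroup H] [InnerProductSpace ℂ H] [CompleteSpace H]

lemma rankOne_apply (u v z : H) : rankOne u v z = ⟪v, z⟫_ℂ • u := rfl

lemma mul_rankOne (a : H →L[ℂ] H) (u v : H) :
    a * rankOne u v = rankOne (a u) v := by
  ext z
  simp [rankOne_apply, ContinuousLinearMap.mul_apply, map_smul]

lemma star_rankOne (u v : H) : star (rankOne u v) = rankOne v u := by
  ext z
  apply ext_inner_left ℂ
  intro w
  rw [ContinuousLinearMap.star_eq_adjoint, ContinuousLinearMap.adjoint_inner_right]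
  simp only [rankOne_apply, inner_smul_left, inner_smul_right, inner_conj_symm]
  ring

lemma rankOne_mul_rankOne (u v u' v' : H) :
    rankOne u v * rankOne u' v' = ⟪v, u'⟫_ℂ • rankOne u v' := by
  ext z
  simp [rankOne_apply, ContinuousLinearMap.mul_apply, inner_smul_right, smul_smul, mul_comm]

end Aux

/-- For a normal unital *-endomorphism `ϑ` of `B(H)` and a unit vector `ξ`:
(i) for `x` in the Bhat space `E^B = ϑ(ξξ*)H` the operator `u(x) : h ↦ ϑ(hξ*)x`
belongs to the Arveson space `E^A` of intertwiners; (ii) for `x' ∈ E^A` the vector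
`x'ξ` belongs to `E^B`; (iii) these maps are mutually inverse isometries. -/
theorem bhat_arveson_isometries {H : Type*} [NormedAddCommGroup H]
    [InnerProductSpace ℂ H] [CompleteSpace H]
    (ϑ : (H →L[ℂ] H) →⋆ₐ[ℂ] (H →L[ℂ] H)) (hnormal : IsNormalMap (H := H) ϑ)
    (ξ : H) (hξ : ⟪ξ, ξ⟫_ℂ = 1) :
    -- (i)
    (∀ x : H, ϑ (rankOne ξ ξ) x = x →
      ∀ T : H →L[ℂ] H, (∀ h, T h = ϑ (rankOne h ξ) x) → ∀ a, ϑ a * T = T * a) ∧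
    -- (ii)
    (∀ T : H →L[ℂ] H, (∀ a, ϑ a * T = T * a) → ϑ (rankOne ξ ξ) (T ξ) = T ξ) ∧
    -- (iii) mutually inverse …
    (∀ x : H, ϑ (rankOne ξ ξ) x = x →
      ∀ T : H →L[ℂ] H, (∀ h, T h = ϑ (rankOne h ξ) x) → T ξ = x) ∧
    (∀ T : H →L[ℂ] H, (∀ a, ϑ a * T = T * a) →
      ∀ S : H →L[ℂ] H, (∀ h, S h = ϑ (rankOne h ξ) (T ξ)) → S = T) ∧
    -- … isometries
    (∀ x x' : H, ϑ (rankOne ξ ξ) x = x → ϑ (rankOne ξ ξ) x' = x' →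
      ∀ T T' : H →L[ℂ] H, (∀ h, T h = ϑ (rankOne h ξ) x) →
        (∀ h, T' h = ϑ (rankOne h ξ) x') →
        star T * T' = ⟪x, x'⟫_ℂ • (1 : H →L[ℂ] H)) := by
  refine ⟨?_, ?_, ?_, ?_, ?_⟩
  · -- (i)
    intro x hx T hT a
    ext h
    rw [ContinuousLinearMap.mul_apply, ContinuousLinearMap.mul_apply, hT, hT,
      ← ContinuousLinearMap.mul_apply (ϑ a), ← map_mul, mul_rankOne]
  · -- (ii)
    intro T hT
    have := congrArg (fun A => A ξ) (hT (rankOne ξ ξ))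
    simp only [ContinuousLinearMap.mul_apply] at this
    rw [this, rankOne_apply, hξ, one_smul]
  · -- (iii) first
    intro x hx T hT
    rw [hT, hx]
  · -- (iii) second
    intro T hT S hS
    ext h
    have := congrArg (fun A => A ξ) (hT (rankOne h ξ))
    simp only [ContinuousLinearMap.mul_apply] at this
    rw [hS, this, rankOne_apply, hξ, one_smul]
  · -- isometry
    intro x x' hx hx' T T' hT hT'
    ext h'
    apply ext_inner_left ℂ
    intro h
    rw [ContinuousLinearMap.mul_apply, ContinuousLinearMap.star_eq_adjoint,
      ContinuousLinearMap.adjoint_inner_right, hT, hT',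
      ← ContinuousLinearMap.adjoint_inner_right (ϑ (rankOne h ξ)),
      ← ContinuousLinearMap.star_eq_adjoint, ← ContinuousLinearMap.mul_apply,
      ← map_star, ← map_mul, star_rankOne, rankOne_mul_rankOne, map_smul]
    simp only [ContinuousLinearMap.smul_apply, inner_smul_right, hx',
      ContinuousLinearMap.one_apply]
    ring
end

section
/- Let B be a unital C*-algebra and E a full Hilbert B-module (the closed span of ⟨E,E⟩ equals B). Then some finite direct sum E^n contains a unit vector: there exist n ∈ ℕ and X ∈ E^n with ⟨X,X⟩ = 1. -/
/-!
Choose `c` in the span of the inner products with `‖1 - c‖ ≤ 1/2` and write it as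
`c = ∑ ⟨xᵢ, yᵢ⟩`. The vector `u = x + y` of `Eⁿ` satisfies
`⟨u, u⟩ = c + c⋆ + ∑ (⟨xᵢ, xᵢ⟩ + ⟨yᵢ, yᵢ⟩) ≥ c + c⋆ ≥ 1`, so `⟨u, u⟩` is strictly positive and
`u ⋅ ⟨u, u⟩^(-1/2)` is a unit vector.
-/

section CStarAlgebra

variable {A : Type*} [CStarAlgebra A] [PartialOrder A] [StarOrderedRing A]

lemma IsSelfAdjoint.le_one_of_norm_le_one {a : A} (ha : IsSelfAdjoint a) (h : ‖a‖ ≤ 1) :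
    a ≤ 1 :=
  ha.le_algebraMap_norm_self.trans (by simpa using algebraMap_mono A h)

lemma one_le_add_star_of_norm_one_sub_le {c : A} (hc : ‖1 - c‖ ≤ 1 / 2) : 1 ≤ c + star c := by
  have hsa : IsSelfAdjoint (1 - c + star (1 - c)) := by
    rw [IsSelfAdjoint, star_add, star_star, add_comm]
  have hnorm : ‖1 - c + star (1 - c)‖ ≤ 1 :=
    calc ‖1 - c + star (1 - c)‖ ≤ ‖1 - c‖ + ‖star (1 - c)‖ := norm_add_le _ _
      _ ≤ 1 := by rw [norm_star]; linarith
  have hsplit : c + star c = 1 + (1 - (1 - c + star (1 - c))) := by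
    rw [star_sub, star_one]; abel
  rw [hsplit]
  exact le_add_of_nonneg_right (sub_nonneg.mpr (hsa.le_one_of_norm_le_one hnorm))

lemma IsStrictlyPositive.exists_star_mul_mul_eq_one {a : A} (ha : IsStrictlyPositive a) :
    ∃ b : A, star b * a * b = 1 :=
  ⟨a ^ (-(1 / 2) : ℝ), by
    rw [(IsSelfAdjoint.of_nonneg CFC.rpow_nonneg).star_eq, CFC.conjugate_rpow_neg_one_half a]⟩

end CStarAlgebra

section InnerProduct

variable {B E : Type*} [Ring B] (ip : E → E → B)

lemma exists_sum_ip_eq_of_mem_span [Algebra ℂ B] (r : E → B → E)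
    (h_linr : ∀ x y b, ip x (r y b) = ip x y * b) {c : B}
    (hc : c ∈ Submodule.span ℂ {b : B | ∃ x y : E, ip x y = b}) :
    ∃ (n : ℕ) (x y : Fin n → E), ∑ i, ip (x i) (y i) = c := by
  obtain ⟨n, f, g, rfl⟩ := Submodule.mem_span_set'.mp hc
  choose x y hxy using fun i => (g i).2
  refine ⟨n, x, fun i => r (y i) (f i • 1), Finset.sum_congr rfl fun i _ => ?_⟩
  rw [h_linr, hxy, mul_smul_comm, mul_one]

variable [StarRing B] (h_sym : ∀ x y, star (ip x y) = ip y x)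
include h_sym

lemma sum_ip_act_self {ι : Type*} (r : E → B → E) (h_linr : ∀ x y b, ip x (r y b) = ip x y * b)
    (s : Finset ι) (u : ι → E) (b : B) :
    ∑ i ∈ s, ip (r (u i) b) (r (u i) b) = star b * (∑ i ∈ s, ip (u i) (u i)) * b := by
  rw [Finset.mul_sum, Finset.sum_mul]
  refine Finset.sum_congr rfl fun i _ => ?_
  rw [h_linr, ← h_sym, h_linr, star_mul, h_sym]

variable [Add E] (h_addr : ∀ x y z, ip x (y + z) = ip x y + ip x z)
include h_addr

lemma ip_add_self (x y : E) :
    ip (x + y) (x + y) = ip x y + star (ip x y) + (ip x x + ip y y) := by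
  have h_addl : ∀ x y z, ip (x + y) z = ip x z + ip y z := fun x y z => by
    rw [← h_sym, h_addr, star_add, h_sym, h_sym]
  rw [h_addl, h_addr, h_addr, ← h_sym x y]
  abel

lemma sum_add_star_le_sum_ip_add_self [PartialOrder B] [StarOrderedRing B]
    (h_pos : ∀ x, 0 ≤ ip x x) {ι : Type*} (s : Finset ι) (x y : ι → E) :
    (∑ i ∈ s, ip (x i) (y i)) + star (∑ i ∈ s, ip (x i) (y i)) ≤
      ∑ i ∈ s, ip (x i + y i) (x i + y i) := by
  simp only [ip_add_self ip h_sym h_addr, Finset.sum_add_distrib, star_sum]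
  exact le_add_of_nonneg_right <|
    add_nonneg (Finset.sum_nonneg fun i _ => h_pos _) (Finset.sum_nonneg fun i _ => h_pos _)

end InnerProduct

theorem full_module_unit_vector_in_power_general
    {B E : Type*} [NormedRing B] [StarRing B] [CStarRing B] [CompleteSpace B]
    [NormedAlgebra ℂ B] [StarModule ℂ B] [PartialOrder B] [StarOrderedRing B]
    [NormedAddCommGroup E]
    (r : E → B → E)                                  -- the right module action
    (ip : E → E → B)                                  -- the B-valued inner product
    (h_pos : ∀ x, 0 ≤ ip x x)
    (h_addr : ∀ x y z, ip x (y + z) = ip x y + ip x z)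
    (h_linr : ∀ x y b, ip x (r y b) = ip x y * b)
    (h_sym : ∀ x y, star (ip x y) = ip y x)
    (h_full : Dense (↑(Submodule.span ℂ {b : B | ∃ x y : E, ip x y = b}) : Set B)) :
    ∃ (n : ℕ) (X : Fin n → E), ∑ i, ip (X i) (X i) = 1 := by
  let _ : CStarAlgebra B := { }
  obtain ⟨c, hc_span, hc⟩ := Metric.mem_closure_iff.mp (h_full 1) (1 / 2) one_half_pos
  obtain ⟨n, x, y, rfl⟩ := exists_sum_ip_eq_of_mem_span ip r h_linr hc_span
  have h_one_le : 1 ≤ ∑ i, ip (x i + y i) (x i + y i) :=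
    (one_le_add_star_of_norm_one_sub_le (by rw [← dist_eq_norm]; exact hc.le)).trans
      (sum_add_star_le_sum_ip_add_self ip h_sym h_addr h_pos _ x y)
  obtain ⟨b, hb⟩ := (isStrictlyPositive_one.of_le h_one_le).exists_star_mul_mul_eq_one
  exact ⟨n, fun i => r (x i + y i) b, by rw [sum_ip_act_self ip h_sym r h_linr, hb]⟩

/-- **A full Hilbert module over a unital C*-algebra has a unit vector in some `Eⁿ`.**
If `E` is a full Hilbert `B`-module (the closed span of `⟨E,E⟩` is all of `B`),
then there are `n ∈ ℕ` and `X ∈ Eⁿ` with `⟨X,X⟩ = ∑ ⟨Xᵢ,Xᵢ⟩ = 1`. -/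
theorem full_module_unit_vector_in_power
    {B E : Type*} [NormedRing B] [StarRing B] [CStarRing B] [CompleteSpace B]
    [NormedAlgebra ℂ B] [StarModule ℂ B] [PartialOrder B] [StarOrderedRing B]
    [NormedAddCommGroup E] [CompleteSpace E]
    (r : E → B → E)                                  -- the right module action
    (hr_add : ∀ x y b, r (x + y) b = r x b + r y b)
    (hr_add' : ∀ x b c, r x (b + c) = r x b + r x c)
    (hr_mul : ∀ x b c, r (r x b) c = r x (b * c))
    (ip : E → E → B)                                  -- the B-valued inner product
    (h_pos : ∀ x, 0 ≤ ip x x)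
    (h_addr : ∀ x y z, ip x (y + z) = ip x y + ip x z)
    (h_linr : ∀ x y b, ip x (r y b) = ip x y * b)
    (h_sym : ∀ x y, star (ip x y) = ip y x)
    (h_defin : ∀ x, ip x x = 0 → x = 0)
    (h_norm : ∀ x, ‖x‖ = Real.sqrt ‖ip x x‖)
    (h_full : Dense (↑(Submodule.span ℂ {b : B | ∃ x y : E, ip x y = b}) : Set B)) :
    ∃ (n : ℕ) (X : Fin n → E), ∑ i, ip (X i) (X i) = 1 :=
  full_module_unit_vector_in_power_general r ip h_pos h_addr h_linr h_sym h_full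
end

section
/- Let E be a full Hilbert B-module over a C*-algebra B and suppose X, Y ∈ E are such that b = ⟨X,Y⟩ is invertible in B (B unital). Then ⟨X,X⟩ is invertible in B, and X⟨X,X⟩^{-1/2} is a unit vector in E. -/
/-!
If `⟨X, Z⟩ = 1` (take `Z = Y⟨X, Y⟩⁻¹`), expanding `0 ≤ ⟨X - Zt, X - Zt⟩` for a real `t` and
bounding `⟨Z, Z⟩ ≤ ‖⟨Z, Z⟩‖` gives `⟨X, X⟩ ≥ 2t - t²‖⟨Z, Z⟩‖ ≥ t > 0` for `t = (‖⟨Z, Z⟩‖ + 1)⁻¹`,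
so `⟨X, X⟩` is invertible. If `c² = ⟨X, X⟩⁻¹`, then `⟨X, X⟩c` and `c⟨X, X⟩` are a left and a
right inverse of `c`, hence equal, and `⟨Xc, Xc⟩ = c⟨X, X⟩c = ⟨X, X⟩c² = 1`.
-/

theorem mul_mul_eq_one_of_mul_self_eq_ringInverse {M₀ : Type*} [MonoidWithZero M₀] {a c : M₀}
    (ha : IsUnit a) (hc : c * c = Ring.inverse a) : c * a * c = 1 := by
  have hcomm : a * c = c * a :=
    left_inv_eq_right_inv (by rw [mul_assoc, hc, Ring.mul_inverse_cancel a ha])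
      (by rw [← mul_assoc, hc, Ring.inverse_mul_cancel a ha])
  rw [← hcomm, mul_assoc, hc, Ring.mul_inverse_cancel a ha]

theorem inner_act_self_eq_one {B E : Type*} [MonoidWithZero B] [Star B] {r : E → B → E}
    {ip : E → E → B} (h_linr : ∀ x y b, ip x (r y b) = ip x y * b)
    (h_linl : ∀ x y b, ip (r x b) y = star b * ip x y) {x : E} (hx : IsUnit (ip x x)) {c : B}
    (hc : IsSelfAdjoint c) (hcc : c * c = Ring.inverse (ip x x)) : ip (r x c) (r x c) = 1 := by
  rw [h_linl, h_linr, hc.star_eq, ← mul_assoc]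
  exact mul_mul_eq_one_of_mul_self_eq_ringInverse hx hcc

section InnerAlgebra

variable {B E : Type*} [Ring B] [AddGroup E] {ip : E → E → B}

theorem inner_sub_right_of_add_right (h_addr : ∀ x y z, ip x (y + z) = ip x y + ip x z)
    (x y z : E) : ip x (y - z) = ip x y - ip x z :=
  (AddMonoidHom.mk' (ip x) (h_addr x)).map_sub y z

variable [StarRing B]

theorem inner_sub_left_of_add_right (h_addr : ∀ x y z, ip x (y + z) = ip x y + ip x z)
    (h_sym : ∀ x y, star (ip x y) = ip y x) (x y z : E) : ip (x - y) z = ip x z - ip y z := by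
  rw [← h_sym, inner_sub_right_of_add_right h_addr, star_sub, h_sym, h_sym]

variable {r : E → B → E}

theorem inner_self_sub_act (h_addr : ∀ x y z, ip x (y + z) = ip x y + ip x z)
    (h_linr : ∀ x y b, ip x (r y b) = ip x y * b)
    (h_linl : ∀ x y b, ip (r x b) y = star b * ip x y)
    (h_sym : ∀ x y, star (ip x y) = ip y x) (x z : E) (a : B) :
    ip (x - r z a) (x - r z a) = ip x x - ip x z * a - star a * ip z x + star a * ip z z * a := by
  simp only [inner_sub_left_of_add_right h_addr h_sym, inner_sub_right_of_add_right h_addr,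
    h_linr, h_linl, mul_assoc]
  abel

end InnerAlgebra

section CStarAlgebra

variable {B E : Type*} [CStarAlgebra B] [PartialOrder B] [StarOrderedRing B] [AddGroup E]
  {r : E → B → E} {ip : E → E → B}

theorem algebraMap_le_inner_self_of_inner_eq_one (h_pos : ∀ x, 0 ≤ ip x x)
    (h_addr : ∀ x y z, ip x (y + z) = ip x y + ip x z)
    (h_linr : ∀ x y b, ip x (r y b) = ip x y * b)
    (h_linl : ∀ x y b, ip (r x b) y = star b * ip x y)
    (h_sym : ∀ x y, star (ip x y) = ip y x) {x z : E} (hxz : ip x z = 1) :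
    algebraMap ℝ B (‖ip z z‖ + 1)⁻¹ ≤ ip x x := by
  set K := ‖ip z z‖
  set t := (K + 1)⁻¹
  set a := algebraMap ℝ B t
  have hzx : ip z x = 1 := by rw [← h_sym, hxz, star_one]
  have hexp := h_pos (x - r z a)
  rw [inner_self_sub_act h_addr h_linr h_linl h_sym, hxz, hzx, one_mul, mul_one,
    ← algebraMap_star_comm, star_trivial] at hexp
  have hzz : ip z z ≤ algebraMap ℝ B K :=
    IsSelfAdjoint.le_algebraMap_norm_self (IsSelfAdjoint.of_nonneg (h_pos z))
  have hconj := star_left_conjugate_le_conjugate hzz a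
  rw [← algebraMap_star_comm, star_trivial, ← map_mul, ← map_mul] at hconj
  have ht : t ≤ 2 * t - t * K * t := by
    have : t * K ≤ 1 := by
      rw [inv_mul_le_iff₀ (by positivity)]
      linarith
    nlinarith [show 0 < t by positivity]
  calc a ≤ algebraMap ℝ B (2 * t - t * K * t) := algebraMap_mono B ht
    _ = a + a - algebraMap ℝ B (t * K * t) := by rw [map_sub, two_mul, map_add]
    _ ≤ a + a - a * ip z z * a := sub_le_sub_left hconj _
    _ ≤ ip x x := by
      rw [← sub_nonneg]
      convert hexp using 1
      abel

theorem isUnit_inner_self_of_isUnit_inner (h_pos : ∀ x, 0 ≤ ip x x)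
    (h_addr : ∀ x y z, ip x (y + z) = ip x y + ip x z)
    (h_linr : ∀ x y b, ip x (r y b) = ip x y * b)
    (h_linl : ∀ x y b, ip (r x b) y = star b * ip x y)
    (h_sym : ∀ x y, star (ip x y) = ip y x) {x y : E} (hxy : IsUnit (ip x y)) :
    IsUnit (ip x x) := by
  have hxz : ip x (r y (Ring.inverse (ip x y))) = 1 := by
    rw [h_linr, Ring.mul_inverse_cancel _ hxy]
  exact CStarAlgebra.isUnit_of_le _
    (algebraMap_le_inner_self_of_inner_eq_one h_pos h_addr h_linr h_linl h_sym hxz)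
    (isStrictlyPositive_algebraMap (by positivity))

end CStarAlgebra

theorem unit_vector_from_invertible_inner_general
    {B E : Type*} [NormedRing B] [StarRing B] [CStarRing B] [CompleteSpace B]
    [NormedAlgebra ℂ B] [StarModule ℂ B] [PartialOrder B] [StarOrderedRing B]
    [NormedAddCommGroup E]
    (r : E → B → E)                                  -- the right module action
    (ip : E → E → B)                                  -- the B-valued inner product
    (h_pos : ∀ x, 0 ≤ ip x x)
    (h_addr : ∀ x y z, ip x (y + z) = ip x y + ip x z)
    (h_linr : ∀ x y b, ip x (r y b) = ip x y * b)
    (h_linl : ∀ x y b, ip (r x b) y = star b * ip x y)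
    (h_sym : ∀ x y, star (ip x y) = ip y x)
    (X Y : E) (h_inv : IsUnit (ip X Y)) :
    IsUnit (ip X X) ∧
      ∀ c : B, 0 ≤ c → c * c = Ring.inverse (ip X X) → ip (r X c) (r X c) = 1 := by
  let _ : CStarAlgebra B := ⟨⟩
  have hX := isUnit_inner_self_of_isUnit_inner h_pos h_addr h_linr h_linl h_sym h_inv
  exact ⟨hX, fun c hc hcc => inner_act_self_eq_one h_linr h_linl hX (.of_nonneg hc) hcc⟩

/-- If `X, Y` in a full Hilbert `B`-module satisfy that `⟨X,Y⟩` is invertible in the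
unital C*-algebra `B`, then `⟨X,X⟩` is invertible, and `X⟨X,X⟩^{-1/2}` is a unit
vector: for every positive square root `c` of `⟨X,X⟩⁻¹`, `⟨Xc, Xc⟩ = 1`. -/
theorem unit_vector_from_invertible_inner
    {B E : Type*} [NormedRing B] [StarRing B] [CStarRing B] [CompleteSpace B]
    [NormedAlgebra ℂ B] [StarModule ℂ B] [PartialOrder B] [StarOrderedRing B]
    [NormedAddCommGroup E] [CompleteSpace E]
    (r : E → B → E)                                  -- the right module action
    (hr_add : ∀ x y b, r (x + y) b = r x b + r y b)
    (hr_add' : ∀ x b c, r x (b + c) = r x b + r x c)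
    (hr_mul : ∀ x b c, r (r x b) c = r x (b * c))
    (ip : E → E → B)                                  -- the B-valued inner product
    (h_pos : ∀ x, 0 ≤ ip x x)
    (h_addr : ∀ x y z, ip x (y + z) = ip x y + ip x z)
    (h_linr : ∀ x y b, ip x (r y b) = ip x y * b)
    (h_linl : ∀ x y b, ip (r x b) y = star b * ip x y)
    (h_sym : ∀ x y, star (ip x y) = ip y x)
    (h_defin : ∀ x, ip x x = 0 → x = 0)
    (h_norm : ∀ x, ‖x‖ = Real.sqrt ‖ip x x‖)
    (h_full : Dense (↑(Submodule.span ℂ {b : B | ∃ x y : E, ip x y = b}) : Set B))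
    (X Y : E) (h_inv : IsUnit (ip X Y)) :
    IsUnit (ip X X) ∧
      ∀ c : B, 0 ≤ c → c * c = Ring.inverse (ip X X) → ip (r X c) (r X c) = 1 :=
  unit_vector_from_invertible_inner_general r ip h_pos h_addr h_linr h_linl h_sym X Y h_inv
end

section
/- In a product system (E_t)_{t∈S} with associative unitaries u_{s,t} : E_s ⊗ E_t → E_{s+t} such that u_{0,0} is the canonical identification E_0 ⊗ E_0 ≅ E_0, any left dilation (v_t : L ⊗ E_t → L) satisfying the associativity condition v_s(v_t(x ⊗ y_t) ⊗ y_s) = v_{t+s}(x ⊗ u_{t,s}(y_t ⊗ y_s)) necessarily has v_0 equal to the canonical identification L ⊗ E_0 ≅ L. -/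
open scoped InnerProductSpace NNReal
set_option synthInstance.maxHeartbeats 1000000
set_option maxHeartbeats 1000000

/-- **`v₀` of a left dilation is the canonical identification.**
`(E t)` is a product system of Hilbert spaces: associative bilinear unitary
multiplications `m s t : E s → E t → E (s+t)`, with `E 0 = ℂ` (one-dimensional,
spanned by a unit vector `one`) and `m 0 0` the canonical identification.
If `(v t : L ⊗ E t → L)` is a left dilation (unitaries iterating associatively
with the product system structure, `L ≠ 0`), then `v 0` is the canonical
identification `L ⊗ E 0 ≅ L`: `v 0 x y = ⟨one, y⟩ • x`. -/
theorem left_dilation_v_zero_canonical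
    (E : ℝ≥0 → Type*) [∀ t, NormedAddCommGroup (E t)] [∀ t, InnerProductSpace ℂ (E t)]
    (m : ∀ s t, E s → E t → E (s + t))
    (hm_lin : ∀ s t (x : E s), IsLinearMap ℂ (m s t x))
    (hm_lin' : ∀ s t (y : E t), IsLinearMap ℂ (fun x => m s t x y))
    (hm_iso : ∀ s t (x x' : E s) (y y' : E t),
      ⟪m s t x y, m s t x' y'⟫_ℂ = ⟪x, x'⟫_ℂ * ⟪y, y'⟫_ℂ)
    (hm_dense : ∀ s t, Dense (↑(Submodule.span ℂ
      {w : E (s + t) | ∃ x y, m s t x y = w}) : Set (E (s + t))))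
    (hm_assoc : ∀ r s t (x : E r) (y : E s) (z : E t),
      cast (congrArg E (add_assoc r s t)) (m (r + s) t (m r s x y) z)
        = m r (s + t) x (m s t y z))
    (one : E 0) (hone : ⟪one, one⟫_ℂ = 1)
    (honedim : ∀ x : E 0, x = ⟪one, x⟫_ℂ • one)     -- `E 0 = ℂ`
    (hu00 : cast (congrArg E (zero_add (0 : ℝ≥0))) (m 0 0 one one) = one)
    (L : Type*) [NormedAddCommGroup L] [InnerProductSpace ℂ L]
    (hL : ∃ x : L, x ≠ 0)
    (v : ∀ t, L → E t → L)
    (hv_lin : ∀ t (x : L), IsLinearMap ℂ (v t x))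
    (hv_lin' : ∀ t (y : E t), IsLinearMap ℂ (fun x => v t x y))
    (hv_iso : ∀ t (x x' : L) (y y' : E t),
      ⟪v t x y, v t x' y'⟫_ℂ = ⟪x, x'⟫_ℂ * ⟪y, y'⟫_ℂ)
    (hv_dense : ∀ t, Dense (↑(Submodule.span ℂ
      {w : L | ∃ x y, v t x y = w}) : Set L))
    (hv_assoc : ∀ s t (x : L) (ys : E s) (yt : E t),
      v t (v s x ys) yt = v (s + t) x (m s t ys yt)) :
    ∀ (x : L) (y : E 0), v 0 x y = ⟪one, y⟫_ℂ • x := by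

  have hU : ∀ a b : L, ⟪v 0 a one, v 0 b one⟫_ℂ = ⟪a, b⟫_ℂ := by
    intro a b; rw [hv_iso, hone, mul_one]
  have hcast : ∀ (s t : ℝ≥0) (hst : s = t) (x : L) (w : E s),
      v s x w = v t x (cast (congrArg E hst) w) := by
    rintro s t rfl x w; rfl
  have hidem : ∀ x : L, v 0 (v 0 x one) one = v 0 x one := by
    intro x
    rw [hv_assoc 0 0 x one one, hcast (0 + 0) 0 (zero_add 0) x (m 0 0 one one), hu00]
  have key : ∀ x : L, v 0 x one = x := by
    intro x
    have e1 : ⟪v 0 x one, x⟫_ℂ = ⟪x, x⟫_ℂ := by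
      have := hU (v 0 x one) x
      rw [hidem, hU x x] at this; exact this.symm
    have e2 : ⟪x, v 0 x one⟫_ℂ = ⟪x, x⟫_ℂ := by
      have := hU x (v 0 x one)
      rw [hidem, hU x x] at this; exact this.symm
    have e3 : ⟪v 0 x one - x, v 0 x one - x⟫_ℂ = 0 := by
      rw [inner_sub_left, inner_sub_right, inner_sub_right, e1, e2, hU x x]
      ring
    have := inner_self_eq_zero.mp e3
    exact sub_eq_zero.mp this
  intro x y
  calc v 0 x y = v 0 x (⟪one, y⟫_ℂ • one) := by rw [← honedim y]
    _ = ⟪one, y⟫_ℂ • v 0 x one := (hv_lin 0 x).map_smul _ _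
    _ = ⟪one, y⟫_ℂ • x := by rw [key]
end

section
/- Given a left dilation (v_t : L ⊗ E_t → L) and a right dilation (w_t : E_t ⊗ R → R) of the same product system of Hilbert spaces E^⊗, the operators u_t := (v_t ⊗ id_R)(id_L ⊗ w_t*) on L ⊗ R form a one-parameter group of unitaries: u_s u_t = u_{s+t} and u_0 = id. -/
open scoped InnerProductSpace NNReal

/-!
Each `u t` maps the elementary tensors `x ⊗ w t (y ⊗ z)`, whose span is dense, to `v t (x ⊗ y) ⊗ z`,
preserving their inner products; so it is an isometry, and its range is closed and contains the
dense span of the `v t (x ⊗ y) ⊗ z`, hence everything. The group law holds on the dense span of the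
`x ⊗ w t (y ⊗ w s (y' ⊗ z))` by the two associativity rules. Finally `1 ⊗ 1 = 1` in `E 0` makes
`v 0 (· ⊗ 1)` and `w 0 (1 ⊗ ·)` idempotent isometries, i.e. identities, so `u 0 = id`.
-/

theorem apply_cast_congrArg {ι α : Sort*} {E : ι → Sort*} (f : ∀ i, E i → α) {i j : ι}
    (h : i = j) (y : E i) : f j (cast (congrArg E h) y) = f i y := by
  subst h; rfl

section Density

variable {𝕜 E F G : Type*} [NontriviallyNormedField 𝕜]
  [NormedAddCommGroup E] [NormedSpace 𝕜 E] [NormedAddCommGroup F] [NormedSpace 𝕜 F]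
  [NormedAddCommGroup G] [NormedSpace 𝕜 G]

theorem Submodule.dense_span_univ : Dense (Submodule.span 𝕜 (Set.univ : Set E) : Set E) := by
  simp [dense_univ]

theorem ContinuousLinearMap.apply_mem_of_dense_span {S : Set E}
    (hS : Dense (Submodule.span 𝕜 S : Set E)) (g : E →L[𝕜] F) {N : Submodule 𝕜 F}
    (hN : IsClosed (N : Set F)) (hg : ∀ x ∈ S, g x ∈ N) (x : E) : g x ∈ N :=
  have hspan : Submodule.span 𝕜 S ≤ N.comap (g : E →ₗ[𝕜] F) := Submodule.span_le.2 hg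
  closure_minimal hspan (hN.preimage g.continuous) (hS x)

theorem ContinuousLinearMap.dense_span_image2 (f : E →L[𝕜] F →L[𝕜] G) {S : Set E} {T : Set F}
    (hS : Dense (Submodule.span 𝕜 S : Set E)) (hT : Dense (Submodule.span 𝕜 T : Set F))
    (hf : Dense (Submodule.span 𝕜 {k : G | ∃ x z, f x z = k} : Set G)) :
    Dense (Submodule.span 𝕜 (Set.image2 (fun x z => f x z) S T) : Set G) := by
  set M := Submodule.span 𝕜 (Set.image2 (fun x z => f x z) S T)
  have hS_mem : ∀ x ∈ S, ∀ z, f x z ∈ M.topologicalClosure := fun x hx =>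
    (f x).apply_mem_of_dense_span hT M.isClosed_topologicalClosure fun z hz =>
      M.le_topologicalClosure (Submodule.subset_span ⟨x, hx, z, hz, rfl⟩)
  have h_mem : ∀ x z, f x z ∈ M.topologicalClosure := fun x z =>
    ((f.flip z).apply_mem_of_dense_span hS M.isClosed_topologicalClosure fun x hx =>
      hS_mem x hx z) x
  have hle : Submodule.span 𝕜 {k : G | ∃ x z, f x z = k} ≤ M.topologicalClosure :=
    Submodule.span_le.2 fun _ ⟨x, z, hk⟩ => hk ▸ h_mem x z
  rw [← dense_closure, ← Submodule.topologicalClosure_coe]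
  exact hf.mono hle

end Density

section InnerProduct

variable {𝕜 E F G : Type*} [RCLike 𝕜]
  [NormedAddCommGroup E] [InnerProductSpace 𝕜 E] [NormedAddCommGroup F] [InnerProductSpace 𝕜 F]
  [NormedAddCommGroup G] [InnerProductSpace 𝕜 G]

theorem norm_eq_mul_of_inner_eq_mul {f : E → F → G}
    (hf : ∀ x x' z z', ⟪f x z, f x' z'⟫_𝕜 = ⟪x, x'⟫_𝕜 * ⟪z, z'⟫_𝕜) (x : E) (z : F) :
    ‖f x z‖ = ‖x‖ * ‖z‖ := by
  have h := hf x x z z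
  simp only [inner_self_eq_norm_sq_to_K, ← mul_pow] at h
  exact (sq_eq_sq₀ (norm_nonneg _) (by positivity)).1 (by exact_mod_cast h)

noncomputable def bilinOfInnerEqMul (f : E → F → G) (hlin : ∀ x, IsLinearMap 𝕜 (f x))
    (hlin' : ∀ z, IsLinearMap 𝕜 (fun x => f x z))
    (hf : ∀ x x' z z', ⟪f x z, f x' z'⟫_𝕜 = ⟪x, x'⟫_𝕜 * ⟪z, z'⟫_𝕜) : E →L[𝕜] F →L[𝕜] G :=
  LinearMap.mkContinuous₂
    (LinearMap.mk₂ 𝕜 f (fun x x' z => (hlin' z).map_add x x') (fun c x z => (hlin' z).map_smul c x)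
      (fun x => (hlin x).map_add) (fun c x z => (hlin x).map_smul c z))
    1 fun x z => by simp [norm_eq_mul_of_inner_eq_mul hf]

theorem ContinuousLinearMap.inner_map_map_of_dense_span (T : E →L[𝕜] F) {S : Set E}
    (hS : Dense (Submodule.span 𝕜 S : Set E))
    (hT : ∀ a ∈ S, ∀ b ∈ S, ⟪T a, T b⟫_𝕜 = ⟪a, b⟫_𝕜) (k k' : E) :
    ⟪T k, T k'⟫_𝕜 = ⟪k, k'⟫_𝕜 := by
  have hS_left : ∀ a ∈ S, ∀ k, ⟪T a, T k⟫_𝕜 = ⟪a, k⟫_𝕜 := fun a ha k => by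
    have : (innerSL 𝕜 (T a)).comp T = innerSL 𝕜 a :=
      ContinuousLinearMap.ext_on hS fun b hb => by simpa using hT a ha b hb
    simpa using DFunLike.congr_fun this k
  have : (innerSL 𝕜 (T k)).comp T = innerSL 𝕜 k := by
    refine ContinuousLinearMap.ext_on hS fun a ha => ?_
    simp only [ContinuousLinearMap.comp_apply, innerSL_apply_apply]
    rw [← inner_conj_symm, hS_left a ha k, inner_conj_symm]
  simpa using DFunLike.congr_fun this k'

theorem eq_self_of_idempotent_of_inner_map_map {P : E → E} (hP : ∀ x, P (P x) = P x)
    (hinner : ∀ x y, ⟪P x, P y⟫_𝕜 = ⟪x, y⟫_𝕜) (x : E) : P x = x :=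
  ext_inner_right 𝕜 fun y => by rw [← hinner, hP, hinner]

theorem ContinuousLinearMap.surjective_of_isometry_of_dense_span [CompleteSpace E]
    (T : E →L[𝕜] F) (hT : ∀ x, ‖T x‖ = ‖x‖) {S : Set F}
    (hS : Dense (Submodule.span 𝕜 S : Set F)) (hST : S ⊆ Set.range T) :
    Function.Surjective T := by
  have hclosed : IsClosed (Set.range T) :=
    (AddMonoidHomClass.isometry_of_norm T hT).isClosedEmbedding.isClosed_range
  have hle : Submodule.span 𝕜 S ≤ LinearMap.range (T : E →ₗ[𝕜] F) :=
    Submodule.span_le.2 hST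
  intro y
  exact closure_minimal hle hclosed (hS y)

end InnerProduct

theorem left_right_dilation_unitary_group_general
    (E : ℝ≥0 → Type*) [∀ t, NormedAddCommGroup (E t)] [∀ t, InnerProductSpace ℂ (E t)]
    (m : ∀ s t, E s → E t → E (s + t))
    (one : E 0) (hone : ⟪one, one⟫_ℂ = 1)
    (hu00 : cast (congrArg E (zero_add (0 : ℝ≥0))) (m 0 0 one one) = one)
    -- the left dilation `(v t : L ⊗ E t → L)`
    (L : Type*) [NormedAddCommGroup L] [InnerProductSpace ℂ L]
    (v : ∀ t, L → E t → L)
    (hv_iso : ∀ t (x x' : L) (y y' : E t),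
      ⟪v t x y, v t x' y'⟫_ℂ = ⟪x, x'⟫_ℂ * ⟪y, y'⟫_ℂ)
    (hv_dense : ∀ t, Dense (↑(Submodule.span ℂ {z : L | ∃ x y, v t x y = z}) : Set L))
    (hv_assoc : ∀ s t (x : L) (ys : E s) (yt : E t),
      v t (v s x ys) yt = v (s + t) x (m s t ys yt))
    -- the right dilation `(w t : E t ⊗ R → R)`
    (R : Type*) [NormedAddCommGroup R] [InnerProductSpace ℂ R]
    (w : ∀ t, E t → R → R)
    (hw_lin : ∀ t (y : E t), IsLinearMap ℂ (w t y))
    (hw_lin' : ∀ t (z : R), IsLinearMap ℂ (fun y => w t y z))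
    (hw_iso : ∀ t (y y' : E t) (z z' : R),
      ⟪w t y z, w t y' z'⟫_ℂ = ⟪y, y'⟫_ℂ * ⟪z, z'⟫_ℂ)
    (hw_dense : ∀ t, Dense (↑(Submodule.span ℂ {z : R | ∃ y z', w t y z' = z}) : Set R))
    (hw_assoc : ∀ t s (yt : E t) (ys : E s) (z : R),
      w t yt (w s ys z) = w (t + s) (m t s yt ys) z)
    -- the Hilbert space `K = L ⊗ R`
    (K : Type*) [NormedAddCommGroup K] [InnerProductSpace ℂ K] [CompleteSpace K]
    (τ : L → R → K)
    (hτ_lin : ∀ (x : L), IsLinearMap ℂ (τ x))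
    (hτ_lin' : ∀ (z : R), IsLinearMap ℂ (fun x => τ x z))
    (hτ_iso : ∀ (x x' : L) (z z' : R), ⟪τ x z, τ x' z'⟫_ℂ = ⟪x, x'⟫_ℂ * ⟪z, z'⟫_ℂ)
    (hτ_dense : Dense (↑(Submodule.span ℂ {k : K | ∃ x z, τ x z = k}) : Set K))
    -- the operators `u t = (v t ⊗ id_R)(id_L ⊗ (w t)*)`
    (u : ∀ _ : ℝ≥0, K →L[ℂ] K)
    (hu : ∀ t (x : L) (yt : E t) (z : R), u t (τ x (w t yt z)) = τ (v t x yt) z) :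
    (∀ t, Function.Surjective (u t)) ∧ (∀ t (k : K), ‖u t k‖ = ‖k‖) ∧
      (∀ s t, (u s).comp (u t) = u (t + s)) ∧ u 0 = ContinuousLinearMap.id ℂ K := by
  have hτ_image2 {S : Set L} {T : Set R} (hS : Dense (Submodule.span ℂ S : Set L))
      (hT : Dense (Submodule.span ℂ T : Set R)) :
      Dense (Submodule.span ℂ (Set.image2 τ S T) : Set K) :=
    (bilinOfInnerEqMul τ hτ_lin hτ_lin' hτ_iso).dense_span_image2 hS hT hτ_dense
  have hnorm (t : ℝ≥0) (k : K) : ‖u t k‖ = ‖k‖ := by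
    have hinner := (u t).inner_map_map_of_dense_span
      (hτ_image2 Submodule.dense_span_univ (hw_dense t)) (by
        rintro _ ⟨x, -, _, ⟨y, z, rfl⟩, rfl⟩ _ ⟨x', -, _, ⟨y', z', rfl⟩, rfl⟩
        rw [hu, hu, hτ_iso, hτ_iso, hv_iso, hw_iso]
        ring) k k
    rw [@norm_eq_sqrt_re_inner ℂ, @norm_eq_sqrt_re_inner ℂ, hinner]
  refine ⟨fun t => (u t).surjective_of_isometry_of_dense_span (hnorm t)
    (hτ_image2 (hv_dense t) Submodule.dense_span_univ) ?_, hnorm, fun s t => ?_, ?_⟩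
  · rintro _ ⟨_, ⟨x, y, rfl⟩, z, -, rfl⟩
    exact ⟨τ x (w t y z), hu t x y z⟩
  · refine ContinuousLinearMap.ext_on (hτ_image2 Submodule.dense_span_univ
      ((bilinOfInnerEqMul (w t) (hw_lin t) (hw_lin' t) (hw_iso t)).dense_span_image2
        Submodule.dense_span_univ (hw_dense s) (hw_dense t))) ?_
    rintro _ ⟨x, -, _, ⟨y, -, _, ⟨y', z, rfl⟩, rfl⟩, rfl⟩
    change u s (u t (τ x (w t y (w s y' z)))) = u (t + s) (τ x (w t y (w s y' z)))
    rw [hu, hu, hv_assoc, hw_assoc, hu]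
  · have hv0 (x : L) : v 0 x one = x :=
      eq_self_of_idempotent_of_inner_map_map (𝕜 := ℂ) (P := fun x => v 0 x one)
      (fun x => by rw [hv_assoc, ← apply_cast_congrArg (fun t y => v t x y) (zero_add 0), hu00])
      (fun x y => by rw [hv_iso, hone, mul_one]) x
    have hw0 (z : R) : w 0 one z = z :=
      eq_self_of_idempotent_of_inner_map_map (𝕜 := ℂ) (P := fun z => w 0 one z)
      (fun z => by rw [hw_assoc, ← apply_cast_congrArg (fun t y => w t y z) (zero_add 0), hu00])
      (fun z z' => by rw [hw_iso, hone, one_mul]) z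
    refine ContinuousLinearMap.ext_on hτ_dense ?_
    rintro _ ⟨x, z, rfl⟩
    simpa [hv0, hw0] using hu 0 x one z

/-- **A left and a right dilation of the same product system give a unitary group.**
`(E t)` is a product system of Hilbert spaces (multiplications `m`), `(v t)` a left
dilation to `L`, `(w t)` a right dilation to `R`, and `K = L ⊗ R` (realized as a
Hilbert space with a bilinear "elementary tensor" map `τ : L → R → K` whose products
are total and satisfy the tensor inner product formula).  The operators
`u t := (v t ⊗ id_R)(id_L ⊗ (w t)*)`, characterized by
`u t (x ⊗ w t (y ⊗ z)) = v t (x ⊗ y) ⊗ z`, form a one-parameter group of unitaries: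
`u s ∘ u t = u (t+s)` and `u 0 = id`. -/
theorem left_right_dilation_unitary_group
    (E : ℝ≥0 → Type*) [∀ t, NormedAddCommGroup (E t)] [∀ t, InnerProductSpace ℂ (E t)]
    [∀ t, CompleteSpace (E t)]
    (m : ∀ s t, E s → E t → E (s + t))
    (hm_lin : ∀ s t (x : E s), IsLinearMap ℂ (m s t x))
    (hm_lin' : ∀ s t (y : E t), IsLinearMap ℂ (fun x => m s t x y))
    (hm_iso : ∀ s t (x x' : E s) (y y' : E t),
      ⟪m s t x y, m s t x' y'⟫_ℂ = ⟪x, x'⟫_ℂ * ⟪y, y'⟫_ℂ)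
    (hm_dense : ∀ s t, Dense (↑(Submodule.span ℂ
      {z : E (s + t) | ∃ x y, m s t x y = z}) : Set (E (s + t))))
    (hm_assoc : ∀ r s t (x : E r) (y : E s) (z : E t),
      cast (congrArg E (add_assoc r s t)) (m (r + s) t (m r s x y) z)
        = m r (s + t) x (m s t y z))
    (one : E 0) (hone : ⟪one, one⟫_ℂ = 1)
    (honedim : ∀ x : E 0, x = ⟪one, x⟫_ℂ • one)     -- `E 0 = ℂ`
    (hu00 : cast (congrArg E (zero_add (0 : ℝ≥0))) (m 0 0 one one) = one)
    -- the left dilation `(v t : L ⊗ E t → L)`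
    (L : Type*) [NormedAddCommGroup L] [InnerProductSpace ℂ L] [CompleteSpace L]
    (hL : ∃ x : L, x ≠ 0)
    (v : ∀ t, L → E t → L)
    (hv_lin : ∀ t (x : L), IsLinearMap ℂ (v t x))
    (hv_lin' : ∀ t (y : E t), IsLinearMap ℂ (fun x => v t x y))
    (hv_iso : ∀ t (x x' : L) (y y' : E t),
      ⟪v t x y, v t x' y'⟫_ℂ = ⟪x, x'⟫_ℂ * ⟪y, y'⟫_ℂ)
    (hv_dense : ∀ t, Dense (↑(Submodule.span ℂ {z : L | ∃ x y, v t x y = z}) : Set L))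
    (hv_assoc : ∀ s t (x : L) (ys : E s) (yt : E t),
      v t (v s x ys) yt = v (s + t) x (m s t ys yt))
    -- the right dilation `(w t : E t ⊗ R → R)`
    (R : Type*) [NormedAddCommGroup R] [InnerProductSpace ℂ R] [CompleteSpace R]
    (hR : ∃ z : R, z ≠ 0)
    (w : ∀ t, E t → R → R)
    (hw_lin : ∀ t (y : E t), IsLinearMap ℂ (w t y))
    (hw_lin' : ∀ t (z : R), IsLinearMap ℂ (fun y => w t y z))
    (hw_iso : ∀ t (y y' : E t) (z z' : R),
      ⟪w t y z, w t y' z'⟫_ℂ = ⟪y, y'⟫_ℂ * ⟪z, z'⟫_ℂ)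
    (hw_dense : ∀ t, Dense (↑(Submodule.span ℂ {z : R | ∃ y z', w t y z' = z}) : Set R))
    (hw_assoc : ∀ t s (yt : E t) (ys : E s) (z : R),
      w t yt (w s ys z) = w (t + s) (m t s yt ys) z)
    -- the Hilbert space `K = L ⊗ R`
    (K : Type*) [NormedAddCommGroup K] [InnerProductSpace ℂ K] [CompleteSpace K]
    (τ : L → R → K)
    (hτ_lin : ∀ (x : L), IsLinearMap ℂ (τ x))
    (hτ_lin' : ∀ (z : R), IsLinearMap ℂ (fun x => τ x z))
    (hτ_iso : ∀ (x x' : L) (z z' : R), ⟪τ x z, τ x' z'⟫_ℂ = ⟪x, x'⟫_ℂ * ⟪z, z'⟫_ℂ)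
    (hτ_dense : Dense (↑(Submodule.span ℂ {k : K | ∃ x z, τ x z = k}) : Set K))
    -- the operators `u t = (v t ⊗ id_R)(id_L ⊗ (w t)*)`
    (u : ∀ _ : ℝ≥0, K →L[ℂ] K)
    (hu : ∀ t (x : L) (yt : E t) (z : R), u t (τ x (w t yt z)) = τ (v t x yt) z) :
    (∀ t, Function.Surjective (u t)) ∧ (∀ t (k : K), ‖u t k‖ = ‖k‖) ∧
      (∀ s t, (u s).comp (u t) = u (t + s)) ∧ u 0 = ContinuousLinearMap.id ℂ K :=
  left_right_dilation_unitary_group_general E m one hone hu00 L v hv_iso hv_dense hv_assoc R w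
    hw_lin hw_lin' hw_iso hw_dense hw_assoc K τ hτ_lin hτ_lin' hτ_iso hτ_dense u hu
end

section
/- Let (v_t : L ⊗ E_t → L) be a left dilation of a product system of Hilbert spaces E^⊗. Then ϑ_t(a) := v_t(a ⊗ id_{E_t})v_t* defines an E_0-semigroup on B(L): each ϑ_t is a unital *-endomorphism and ϑ_s ∘ ϑ_t = ϑ_{s+t}. -/
open scoped InnerProductSpace NNReal

/-! Everything is tested on the total set of vectors `v t x y`: on it, `ϑ t a` acts as `a ⊗ id`,
so unitality, linearity and multiplicativity are immediate, and the adjoint is identified through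
`⟪v t x y, v t x' y'⟫ = ⟪x, x'⟫ ⟪y, y'⟫`. For the semigroup law, `ϑ s (ϑ t a)` and `ϑ (t + s) a`
agree on `v s (v t x yₜ) yₛ = v (t + s) x (yₜ yₛ)`; since `w ↦ v s w yₛ` is bounded and the
`v t x yₜ` are total, they agree on every `v s w yₛ`, and hence everywhere. -/

namespace ContinuousLinearMap

variable {𝕜 X Y L M : Type*} [RCLike 𝕜]
  [NormedAddCommGroup L] [NormedSpace 𝕜 L] [NormedAddCommGroup M] [NormedSpace 𝕜 M]

theorem ext_on_dense_span_apply {V : X → Y → L}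
    (hV : Dense (↑(Submodule.span 𝕜 {z : L | ∃ x y, V x y = z}) : Set L))
    {f g : L →L[𝕜] M} (h : ∀ x y, f (V x y) = g (V x y)) : f = g :=
  ext_on hV fun _ ⟨x, y, hz⟩ => hz ▸ h x y

end ContinuousLinearMap

section IsometricPairing

variable {𝕜 X Y Z : Type*} [RCLike 𝕜]
  [NormedAddCommGroup X] [InnerProductSpace 𝕜 X] [NormedAddCommGroup Y] [InnerProductSpace 𝕜 Y]
  [NormedAddCommGroup Z] [InnerProductSpace 𝕜 Z]
  {V : X → Y → Z}

theorem norm_apply_eq_mul_of_inner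
    (hV_iso : ∀ x x' y y', ⟪V x y, V x' y'⟫_𝕜 = ⟪x, x'⟫_𝕜 * ⟪y, y'⟫_𝕜) (x : X) (y : Y) :
    ‖V x y‖ = ‖x‖ * ‖y‖ := by
  have h := hV_iso x x y y
  simp only [inner_self_eq_norm_sq_to_K] at h
  have hsq : ‖V x y‖ ^ 2 = (‖x‖ * ‖y‖) ^ 2 := by rw [mul_pow]; exact_mod_cast h
  exact (pow_left_inj₀ (norm_nonneg _) (by positivity) two_ne_zero).mp hsq

noncomputable def rightSliceCLM
    (hV_iso : ∀ x x' y y', ⟪V x y, V x' y'⟫_𝕜 = ⟪x, x'⟫_𝕜 * ⟪y, y'⟫_𝕜)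
    (hV_lin : ∀ y, IsLinearMap 𝕜 (fun x => V x y)) (y : Y) : X →L[𝕜] Z :=
  (IsLinearMap.mk' _ (hV_lin y)).mkContinuous ‖y‖ fun x => by
    rw [IsLinearMap.mk'_apply, norm_apply_eq_mul_of_inner hV_iso, mul_comm]

@[simp]
theorem rightSliceCLM_apply
    (hV_iso : ∀ x x' y y', ⟪V x y, V x' y'⟫_𝕜 = ⟪x, x'⟫_𝕜 * ⟪y, y'⟫_𝕜)
    (hV_lin : ∀ y, IsLinearMap 𝕜 (fun x => V x y)) (y : Y) (x : X) :
    rightSliceCLM hV_iso hV_lin y x = V x y :=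
  rfl

end IsometricPairing

/-- `θ` acts as the ampliation `a ↦ a ⊗ id_Y`, transported to `X` along `V : X ⊗ Y → X`. -/
def IsAmpliation {𝕜 X Y : Type*} [RCLike 𝕜] [NormedAddCommGroup X] [NormedSpace 𝕜 X]
    (V : X → Y → X) (θ : (X →L[𝕜] X) → (X →L[𝕜] X)) : Prop :=
  ∀ a x y, θ a (V x y) = V (a x) y

namespace IsAmpliation

section NormedSpace

variable {𝕜 X Y : Type*} [RCLike 𝕜] [NormedAddCommGroup X] [NormedSpace 𝕜 X]
  {V : X → Y → X} {θ : (X →L[𝕜] X) → (X →L[𝕜] X)}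

theorem map_one (hθ : IsAmpliation V θ)
    (hV : Dense (↑(Submodule.span 𝕜 {z : X | ∃ x y, V x y = z}) : Set X)) : θ 1 = 1 :=
  ContinuousLinearMap.ext_on_dense_span_apply hV fun x y => by simp [hθ _ x y]

theorem map_mul (hθ : IsAmpliation V θ)
    (hV : Dense (↑(Submodule.span 𝕜 {z : X | ∃ x y, V x y = z}) : Set X)) (a b : X →L[𝕜] X) :
    θ (a * b) = θ a * θ b :=
  ContinuousLinearMap.ext_on_dense_span_apply hV fun x y => by simp [hθ _ x y, hθ _ (b x) y]

theorem map_add (hθ : IsAmpliation V θ) (hV_lin : ∀ y, IsLinearMap 𝕜 (fun x => V x y))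
    (hV : Dense (↑(Submodule.span 𝕜 {z : X | ∃ x y, V x y = z}) : Set X)) (a b : X →L[𝕜] X) :
    θ (a + b) = θ a + θ b :=
  ContinuousLinearMap.ext_on_dense_span_apply hV fun x y => by
    rw [hθ, add_apply, (hV_lin y).map_add, add_apply, hθ, hθ]

theorem map_smul (hθ : IsAmpliation V θ) (hV_lin : ∀ y, IsLinearMap 𝕜 (fun x => V x y))
    (hV : Dense (↑(Submodule.span 𝕜 {z : X | ∃ x y, V x y = z}) : Set X)) (c : 𝕜)
    (a : X →L[𝕜] X) : θ (c • a) = c • θ a :=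
  ContinuousLinearMap.ext_on_dense_span_apply hV fun x y => by
    rw [hθ, smul_apply, (hV_lin y).map_smul, smul_apply, hθ]

end NormedSpace

section InnerProductSpace

variable {𝕜 X Y : Type*} [RCLike 𝕜] [NormedAddCommGroup X] [InnerProductSpace 𝕜 X]
  {V : X → Y → X} {θ : (X →L[𝕜] X) → (X →L[𝕜] X)}

theorem map_star [NormedAddCommGroup Y] [InnerProductSpace 𝕜 Y] [CompleteSpace X]
    (hθ : IsAmpliation V θ)
    (hV_iso : ∀ x x' y y', ⟪V x y, V x' y'⟫_𝕜 = ⟪x, x'⟫_𝕜 * ⟪y, y'⟫_𝕜)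
    (hV : Dense (↑(Submodule.span 𝕜 {z : X | ∃ x y, V x y = z}) : Set X)) (a : X →L[𝕜] X) :
    θ (star a) = star (θ a) := by
  refine ContinuousLinearMap.ext_on_dense_span_apply hV fun x y => ?_
  have hinner : innerSL 𝕜 (V (star a x) y) = innerSL 𝕜 (star (θ a) (V x y)) :=
    ContinuousLinearMap.ext_on_dense_span_apply hV fun x' y' => by
      simp only [innerSL_apply_apply, ContinuousLinearMap.star_eq_adjoint,
        ContinuousLinearMap.adjoint_inner_left, hV_iso, hθ a x' y']
  rw [hθ]
  exact ext_inner_right 𝕜 fun z => congrArg (· z) hinner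

theorem comp {Y₂ Y₁₂ : Type*} [NormedAddCommGroup Y₂] [InnerProductSpace 𝕜 Y₂]
    {V₂ : X → Y₂ → X} {V₁₂ : X → Y₁₂ → X} {μ : Y → Y₂ → Y₁₂}
    {θ₂ θ₁₂ : (X →L[𝕜] X) → (X →L[𝕜] X)}
    (hθ : IsAmpliation V θ) (hθ₂ : IsAmpliation V₂ θ₂) (hθ₁₂ : IsAmpliation V₁₂ θ₁₂)
    (hV : Dense (↑(Submodule.span 𝕜 {z : X | ∃ x y, V x y = z}) : Set X))
    (hV₂_lin : ∀ y, IsLinearMap 𝕜 (fun x => V₂ x y))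
    (hV₂_iso : ∀ x x' y y', ⟪V₂ x y, V₂ x' y'⟫_𝕜 = ⟪x, x'⟫_𝕜 * ⟪y, y'⟫_𝕜)
    (hV₂ : Dense (↑(Submodule.span 𝕜 {z : X | ∃ x y, V₂ x y = z}) : Set X))
    (hassoc : ∀ x y y₂, V₂ (V x y) y₂ = V₁₂ x (μ y y₂)) (a : X →L[𝕜] X) :
    θ₂ (θ a) = θ₁₂ a := by
  refine ContinuousLinearMap.ext_on_dense_span_apply hV₂ fun w y₂ => ?_
  let S := rightSliceCLM hV₂_iso hV₂_lin y₂
  have hS : θ₂ (θ a) ∘L S = θ₁₂ a ∘L S :=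
    ContinuousLinearMap.ext_on_dense_span_apply hV fun x y => by
      simp only [S, ContinuousLinearMap.comp_apply, rightSliceCLM_apply]
      rw [hθ₂, hθ, hassoc, hassoc, hθ₁₂]
  simpa [S] using congrArg (· w) hS

end InnerProductSpace

end IsAmpliation

theorem left_dilation_induces_E0_semigroup_general
    (E : ℝ≥0 → Type*) [∀ t, NormedAddCommGroup (E t)] [∀ t, InnerProductSpace ℂ (E t)]
    (m : ∀ s t, E s → E t → E (s + t))
    (L : Type*) [NormedAddCommGroup L] [InnerProductSpace ℂ L] [CompleteSpace L]
    (v : ∀ t, L → E t → L)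
    (hv_lin' : ∀ t (y : E t), IsLinearMap ℂ (fun x => v t x y))
    (hv_iso : ∀ t (x x' : L) (y y' : E t),
      ⟪v t x y, v t x' y'⟫_ℂ = ⟪x, x'⟫_ℂ * ⟪y, y'⟫_ℂ)
    (hv_dense : ∀ t, Dense (↑(Submodule.span ℂ {z : L | ∃ x y, v t x y = z}) : Set L))
    (hv_assoc : ∀ s t (x : L) (ys : E s) (yt : E t),
      v t (v s x ys) yt = v (s + t) x (m s t ys yt))
    -- `ϑ t a = v t (a ⊗ id_{E t}) (v t)*`
    (ϑ : ∀ _ : ℝ≥0, (L →L[ℂ] L) → (L →L[ℂ] L))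
    (hϑ : ∀ t (a : L →L[ℂ] L) (x : L) (y : E t), ϑ t a (v t x y) = v t (a x) y) :
    (∀ t, ϑ t 1 = 1) ∧
    (∀ t (a b : L →L[ℂ] L), ϑ t (a + b) = ϑ t a + ϑ t b) ∧
    (∀ t (c : ℂ) (a : L →L[ℂ] L), ϑ t (c • a) = c • ϑ t a) ∧
    (∀ t (a b : L →L[ℂ] L), ϑ t (a * b) = ϑ t a * ϑ t b) ∧
    (∀ t (a : L →L[ℂ] L), ϑ t (star a) = star (ϑ t a)) ∧
    (∀ s t (a : L →L[ℂ] L), ϑ s (ϑ t a) = ϑ (t + s) a) := by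
  have hamp : ∀ t, IsAmpliation (v t) (ϑ t) := hϑ
  exact ⟨fun t => (hamp t).map_one (hv_dense t),
    fun t => (hamp t).map_add (hv_lin' t) (hv_dense t),
    fun t => (hamp t).map_smul (hv_lin' t) (hv_dense t),
    fun t => (hamp t).map_mul (hv_dense t),
    fun t => (hamp t).map_star (hv_iso t) (hv_dense t),
    fun s t => (hamp t).comp (hamp s) (hamp (t + s)) (hv_dense t) (hv_lin' s) (hv_iso s)
      (hv_dense s) (hv_assoc t s)⟩

/-- **A left dilation induces an E₀-semigroup on `B(L)`.**
Let `(E t)` be a product system of Hilbert spaces (multiplications `m`) and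
`(v t : L ⊗ E t → L)` a left dilation.  Then `ϑ t (a) := v t (a ⊗ id) (v t)*`,
characterized by `ϑ t a (v t (x ⊗ y)) = v t (a x ⊗ y)`, is an E₀-semigroup on
`B(L)`: each `ϑ t` is a unital *-endomorphism, and `ϑ s ∘ ϑ t = ϑ (s + t)`. -/
theorem left_dilation_induces_E0_semigroup
    (E : ℝ≥0 → Type*) [∀ t, NormedAddCommGroup (E t)] [∀ t, InnerProductSpace ℂ (E t)]
    (m : ∀ s t, E s → E t → E (s + t))
    (hm_lin : ∀ s t (x : E s), IsLinearMap ℂ (m s t x))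
    (hm_lin' : ∀ s t (y : E t), IsLinearMap ℂ (fun x => m s t x y))
    (hm_iso : ∀ s t (x x' : E s) (y y' : E t),
      ⟪m s t x y, m s t x' y'⟫_ℂ = ⟪x, x'⟫_ℂ * ⟪y, y'⟫_ℂ)
    (hm_dense : ∀ s t, Dense (↑(Submodule.span ℂ
      {z : E (s + t) | ∃ x y, m s t x y = z}) : Set (E (s + t))))
    (hm_assoc : ∀ r s t (x : E r) (y : E s) (z : E t),
      cast (congrArg E (add_assoc r s t)) (m (r + s) t (m r s x y) z)
        = m r (s + t) x (m s t y z))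
    (one : E 0) (hone : ⟪one, one⟫_ℂ = 1)
    (honedim : ∀ x : E 0, x = ⟪one, x⟫_ℂ • one)     -- `E 0 = ℂ`
    (hu00 : cast (congrArg E (zero_add (0 : ℝ≥0))) (m 0 0 one one) = one)
    (L : Type*) [NormedAddCommGroup L] [InnerProductSpace ℂ L] [CompleteSpace L]
    (hL : ∃ x : L, x ≠ 0)
    (v : ∀ t, L → E t → L)
    (hv_lin : ∀ t (x : L), IsLinearMap ℂ (v t x))
    (hv_lin' : ∀ t (y : E t), IsLinearMap ℂ (fun x => v t x y))
    (hv_iso : ∀ t (x x' : L) (y y' : E t),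
      ⟪v t x y, v t x' y'⟫_ℂ = ⟪x, x'⟫_ℂ * ⟪y, y'⟫_ℂ)
    (hv_dense : ∀ t, Dense (↑(Submodule.span ℂ {z : L | ∃ x y, v t x y = z}) : Set L))
    (hv_assoc : ∀ s t (x : L) (ys : E s) (yt : E t),
      v t (v s x ys) yt = v (s + t) x (m s t ys yt))
    -- `ϑ t a = v t (a ⊗ id_{E t}) (v t)*`
    (ϑ : ∀ _ : ℝ≥0, (L →L[ℂ] L) → (L →L[ℂ] L))
    (hϑ : ∀ t (a : L →L[ℂ] L) (x : L) (y : E t), ϑ t a (v t x y) = v t (a x) y) :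
    (∀ t, ϑ t 1 = 1) ∧
    (∀ t (a b : L →L[ℂ] L), ϑ t (a + b) = ϑ t a + ϑ t b) ∧
    (∀ t (c : ℂ) (a : L →L[ℂ] L), ϑ t (c • a) = c • ϑ t a) ∧
    (∀ t (a b : L →L[ℂ] L), ϑ t (a * b) = ϑ t a * ϑ t b) ∧
    (∀ t (a : L →L[ℂ] L), ϑ t (star a) = star (ϑ t a)) ∧
    (∀ s t (a : L →L[ℂ] L), ϑ s (ϑ t a) = ϑ (t + s) a) :=
  left_dilation_induces_E0_semigroup_general E m L v hv_lin' hv_iso hv_dense hv_assoc ϑ hϑ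
end
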